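/- Suppose the sequences a_0(n), a_1(n) satisfy 2a_0(n) + a_1(n) = 1 and f : [0,1] → ℝ satisfies the Lipschitz condition of order r with constant k, i.e. |f(x_1) − f(x_2)| ≤ k|x_1 − x_2|^r for all x_1, x_2 ∈ [0,1], where 0 < r ≤ 1 and k > 0. Then for every n ≥ 1 and every x ∈ [0,1], |D_n^{M,1}(f; x) − f(x)| ≤ (3|a_1(n)| + 1)(1 + √2) k n^{−r/2}. -/

import Mathlib

/-!
Write `D_n^{M,1} = a(x,n) L_{n,0} + a(1-x,n) L_{n,1}`, where `L_{n,s}` (`durrmeyerShift n s`) is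
`g ↦ (n+1) ∑_k p_{n-1,k-s}(x) ∫₀¹ p_{n,k} g`. Both `L_{n,s}` are positive and reproduce constants,
`a(x,n) + a(1-x,n) = 2 a_0(n) + a_1(n) = 1` and `|a(x,n)| ≤ (|a_1(n)| + 1)/2` on `[0,1]`, so the
error is at most `(|a_1(n)| + 1)/2 · ∑_s L_{n,s} |f - f(x)| (x)`. The Hölder condition and
`|t - x|^r ≤ n^{-r/2} (1 + n (t - x)²)` reduce this to second moments of `L_{n,s}`, which follow
from Beta integrals and the first two moments of the Bernstein basis:
`∑_s L_{n,s} (1 + n (t - x)²) (x) ≤ 4`. This gives the bound `2 (|a_1(n)| + 1) k n^{-r/2}`.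
-/

open Filter Topology

/-- Bernstein basis polynomial `p_{n,k}(x)`, zero when `k < 0` or `k > n`. -/
noncomputable def bern (n : ℕ) (k : ℤ) (x : ℝ) : ℝ :=
  if 0 ≤ k ∧ k ≤ (n : ℤ) then (n.choose k.toNat : ℝ) * x ^ k.toNat * (1 - x) ^ (n - k.toNat)
  else 0

/-- Modified Bernstein basis `p_{n,k}^{M,1}(x)` of Khosravian-Arab et al. -/
noncomputable def pM1 (a0 a1 : ℕ → ℝ) (n : ℕ) (k : ℤ) (x : ℝ) : ℝ :=
  (a1 n * x + a0 n) * bern (n - 1) k x + (a1 n * (1 - x) + a0 n) * bern (n - 1) (k - 1) x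

/-- First-order modified Durrmeyer operator `D_n^{M,1}(f;x)`. -/
noncomputable def DM1 (a0 a1 : ℕ → ℝ) (n : ℕ) (f : ℝ → ℝ) (x : ℝ) : ℝ :=
  ((n : ℝ) + 1) * ∑ k ∈ Finset.range (n + 1),
    pM1 a0 a1 n k x * ∫ t in (0:ℝ)..1, bern n k t * f t

open Finset MeasureTheory
open scoped Nat

theorem integral_pow_mul_one_sub_pow (a b : ℕ) :
    ∫ t in (0:ℝ)..1, t ^ a * (1 - t) ^ b = (a ! * b ! : ℝ) / (a + b + 1)! := by
  induction b generalizing a with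
  | zero =>
    simp [integral_pow, Nat.factorial_succ]
    field_simp
  | succ b ih =>
    have hsplit : ∫ t in (0:ℝ)..1, t ^ a * (1 - t) ^ (b + 1)
        = (∫ t in (0:ℝ)..1, t ^ a * (1 - t) ^ b)
          - ∫ t in (0:ℝ)..1, t ^ (a + 1) * (1 - t) ^ b := by
      rw [← intervalIntegral.integral_sub (Continuous.intervalIntegrable (by fun_prop) _ _)
        (Continuous.intervalIntegrable (by fun_prop) _ _)]
      congr 1; ext t; ring
    rw [hsplit, ih, ih, show a + 1 + b + 1 = a + b + 1 + 1 by ring,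
      show a + (b + 1) + 1 = a + b + 1 + 1 by ring, Nat.factorial_succ (a + b + 1),
      Nat.factorial_succ a, Nat.factorial_succ b]
    push_cast
    field_simp
    ring

theorem bern_natCast (n j : ℕ) (x : ℝ) : bern n j x = (bernsteinPolynomial ℝ n j).eval x := by
  by_cases h : j ≤ n
  · simp [bern, h, bernsteinPolynomial]
  · rw [bernsteinPolynomial.eq_zero_of_lt ℝ (not_le.1 h)]
    simp [bern]
    omega

theorem bern_of_neg (n : ℕ) {k : ℤ} (hk : k < 0) (x : ℝ) : bern n k x = 0 := by
  simp [bern]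
  omega

theorem bern_nonneg (n : ℕ) (k : ℤ) {x : ℝ} (hx : x ∈ Set.Icc (0:ℝ) 1) :
    0 ≤ bern n k x := by
  have := hx.1
  have := sub_nonneg.2 hx.2
  unfold bern
  split_ifs <;> positivity

theorem continuous_bern (n : ℕ) (k : ℤ) : Continuous (bern n k) := by
  unfold bern
  split_ifs <;> fun_prop

theorem sum_range_bern_sub_mul {m s N : ℕ} (hN : m + 1 + s ≤ N) (x : ℝ) (g : ℕ → ℝ) :
    ∑ k ∈ range N, bern m ((k : ℤ) - s) x * g k
      = ∑ j ∈ range (m + 1), (bernsteinPolynomial ℝ m j).eval x * g (s + j) := by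
  obtain ⟨e, rfl⟩ := Nat.exists_eq_add_of_le hN
  rw [show m + 1 + s + e = s + (m + 1 + e) by ring, sum_range_add, sum_range_add,
    sum_eq_zero fun k hk => by rw [bern_of_neg _ (by simp at hk; omega), zero_mul],
    sum_eq_zero (s := range e) fun i _ => ?_]
  · simp [bern_natCast]
  · rw [show ((s + (m + 1 + i) : ℕ) : ℤ) - s = ((m + 1 + i : ℕ) : ℤ) by push_cast; ring,
      bern_natCast, bernsteinPolynomial.eq_zero_of_lt ℝ (by omega)]
    simp

theorem integral_bern_mul_pow {n j : ℕ} (h : j ≤ n) (p : ℕ) :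
    ((n : ℝ) + 1) * ∫ t in (0:ℝ)..1, bern n j t * t ^ p
      = ((j + 1).ascFactorial p : ℝ) / (n + 2).ascFactorial p := by
  have hfac : (n.choose j : ℝ) * j ! * (n - j)! = n ! := by
    exact_mod_cast Nat.choose_mul_factorial_mul_factorial h
  have hj := Nat.factorial_mul_ascFactorial j p
  have hn := Nat.factorial_mul_ascFactorial (n + 1) p
  rw [show n + 1 + 1 = n + 2 by ring, show n + 1 + p = n + p + 1 by ring] at hn
  have hbeta : ∫ t in (0:ℝ)..1, bern n j t * t ^ p
      = n.choose j * ∫ t in (0:ℝ)..1, t ^ (j + p) * (1 - t) ^ (n - j) := by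
    rw [← intervalIntegral.integral_const_mul]
    congr 1
    funext t
    simp only [bern, Int.toNat_natCast, Nat.cast_nonneg, Nat.cast_le, h, and_self, ite_true]
    ring
  rw [hbeta, integral_pow_mul_one_sub_pow, show j + p + (n - j) + 1 = n + p + 1 by omega,
    ← hj, ← hn, Nat.factorial_succ]
  push_cast
  rw [← hfac]
  have : ((n + 2).ascFactorial p : ℝ) ≠ 0 := by positivity
  have : (n.choose j : ℝ) ≠ 0 := by exact_mod_cast (Nat.choose_pos h).ne'
  field_simp

theorem integral_bern {n j : ℕ} (h : j ≤ n) :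
    ((n : ℝ) + 1) * ∫ t in (0:ℝ)..1, bern n j t = 1 := by
  simpa using integral_bern_mul_pow h 0

theorem integral_bern_mul_one_add_sq {n j : ℕ} (h : j ≤ n) (x : ℝ) :
    ((n : ℝ) + 1) * ∫ t in (0:ℝ)..1, bern n j t * (1 + n * (t - x) ^ 2)
      = 1 + n * ((j + 1) * (j + 2) / ((n + 2) * (n + 3)) - 2 * x * (j + 1) / (n + 2) + x ^ 2) := by
  have hint : ∀ p : ℕ, IntervalIntegrable (fun t => bern n j t * t ^ p) volume 0 1 :=
    fun p => ((continuous_bern n j).mul (continuous_pow p)).intervalIntegrable 0 1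
  have h0 := integral_bern_mul_pow h 0
  have h1 := integral_bern_mul_pow h 1
  have h2 := integral_bern_mul_pow h 2
  simp only [Nat.ascFactorial_succ, Nat.ascFactorial_zero] at h0 h1 h2
  have hsplit : (fun t => bern n j t * (1 + n * (t - x) ^ 2)) = fun t =>
      (1 + n * x ^ 2) * (bern n j t * t ^ 0) + (-2 * n * x) * (bern n j t * t ^ 1)
        + n * (bern n j t * t ^ 2) := by
    ext t; ring
  rw [hsplit, intervalIntegral.integral_add ((hint 0).const_mul _ |>.add ((hint 1).const_mul _))
    ((hint 2).const_mul _),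
    intervalIntegral.integral_add ((hint 0).const_mul _) ((hint 1).const_mul _)]
  simp only [intervalIntegral.integral_const_mul]
  push_cast at h0 h1 h2
  linear_combination (1 + n * x ^ 2) * h0 + (-2 * n * x) * h1 + n * h2

theorem sum_bernstein_eval_mul_quadratic (m : ℕ) (x A B C : ℝ) :
    ∑ j ∈ range (m + 1), (bernsteinPolynomial ℝ m j).eval x * (A * j ^ 2 + B * j + C)
      = A * (m * (m - 1) * x ^ 2 + m * x) + B * (m * x) + C := by
  have h0 := congrArg (Polynomial.eval x) (bernsteinPolynomial.sum ℝ m)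
  have h1 := congrArg (Polynomial.eval x) (bernsteinPolynomial.sum_smul ℝ m)
  have h2 := congrArg (Polynomial.eval x) (bernsteinPolynomial.variance ℝ m)
  simp only [Polynomial.eval_finsetSum, Polynomial.eval_mul,
    Polynomial.eval_pow, Polynomial.eval_sub, Polynomial.eval_natCast, Polynomial.eval_X,
    Polynomial.eval_one, nsmul_eq_mul] at h0 h1 h2
  have hsplit :
      ∑ j ∈ range (m + 1), (bernsteinPolynomial ℝ m j).eval x * (A * j ^ 2 + B * j + C)
      = A * ∑ j ∈ range (m + 1), (m * x - j) ^ 2 * (bernsteinPolynomial ℝ m j).eval x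
        + (2 * A * m * x + B) * ∑ j ∈ range (m + 1), j * (bernsteinPolynomial ℝ m j).eval x
        + (C - A * m ^ 2 * x ^ 2) *
          ∑ j ∈ range (m + 1), (bernsteinPolynomial ℝ m j).eval x := by
    simp only [mul_sum, ← sum_add_distrib]
    exact sum_congr rfl fun j _ => by ring
  rw [hsplit, h0, h1, h2]
  ring

noncomputable def durrmeyerShift (n s : ℕ) (g : ℝ → ℝ) (x : ℝ) : ℝ :=
  ((n : ℝ) + 1) * ∑ k ∈ range (n + 1),
    bern (n - 1) ((k : ℤ) - s) x * ∫ t in (0:ℝ)..1, bern n k t * g t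

theorem DM1_eq_add (a0 a1 : ℕ → ℝ) (n : ℕ) (f : ℝ → ℝ) (x : ℝ) :
    DM1 a0 a1 n f x = (a1 n * x + a0 n) * durrmeyerShift n 0 f x
      + (a1 n * (1 - x) + a0 n) * durrmeyerShift n 1 f x := by
  simp only [DM1, pM1, durrmeyerShift, Nat.cast_zero, sub_zero, Nat.cast_one, add_mul,
    sum_add_distrib, mul_assoc, ← mul_sum]
  ring

section durrmeyerShift

variable {m n s : ℕ}

theorem durrmeyerShift_eq_sum_bernstein (hs : s ≤ 1) (g : ℝ → ℝ) (x : ℝ) :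
    durrmeyerShift (m + 1) s g x = ∑ j ∈ range (m + 1), (bernsteinPolynomial ℝ m j).eval x *
      ((((m + 1 : ℕ) : ℝ) + 1) * ∫ t in (0:ℝ)..1, bern (m + 1) (s + j : ℕ) t * g t) := by
  rw [durrmeyerShift, Nat.add_sub_cancel, ← sum_range_bern_sub_mul (N := m + 1 + 1) (by omega) x
    fun k => (((m + 1 : ℕ) : ℝ) + 1) * ∫ t in (0:ℝ)..1, bern (m + 1) k t * g t, mul_sum]
  exact sum_congr rfl fun k _ => by ring

theorem durrmeyerShift_const (hs : s ≤ 1) (c x : ℝ) :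
    durrmeyerShift (m + 1) s (fun _ => c) x = c := by
  have h0 := congrArg (Polynomial.eval x) (bernsteinPolynomial.sum ℝ m)
  simp only [Polynomial.eval_finsetSum, Polynomial.eval_one] at h0
  rw [durrmeyerShift_eq_sum_bernstein hs]
  calc _ = ∑ j ∈ range (m + 1), (bernsteinPolynomial ℝ m j).eval x * c := by
        refine sum_congr rfl fun j hj => ?_
        rw [intervalIntegral.integral_mul_const, ← mul_assoc (_ + 1),
          integral_bern (by simp at hj; omega), one_mul]
    _ = c := by rw [← sum_mul, h0, one_mul]

theorem durrmeyerShift_sub {g h : ℝ → ℝ} (hg : IntervalIntegrable g volume 0 1)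
    (hh : IntervalIntegrable h volume 0 1) (x : ℝ) :
    durrmeyerShift n s (fun t => g t - h t) x
      = durrmeyerShift n s g x - durrmeyerShift n s h x := by
  rw [durrmeyerShift, durrmeyerShift, durrmeyerShift, ← mul_sub, ← sum_sub_distrib]
  congr 1
  refine sum_congr rfl fun k _ => ?_
  rw [← mul_sub, ← intervalIntegral.integral_sub]
  · simp only [mul_sub]
  · exact hg.continuousOn_mul (continuous_bern n k).continuousOn
  · exact hh.continuousOn_mul (continuous_bern n k).continuousOn

theorem durrmeyerShift_const_mul (c : ℝ) (g : ℝ → ℝ) (x : ℝ) :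
    durrmeyerShift n s (fun t => c * g t) x = c * durrmeyerShift n s g x := by
  have hint (k : ℕ) : ∫ t in (0:ℝ)..1, bern n k t * (c * g t)
      = c * ∫ t in (0:ℝ)..1, bern n k t * g t := by
    rw [← intervalIntegral.integral_const_mul]
    simp only [mul_left_comm]
  simp only [durrmeyerShift, hint, mul_sum]
  exact sum_congr rfl fun _ _ => by ring

theorem abs_durrmeyerShift_le {g h : ℝ → ℝ} (hg : IntervalIntegrable g volume 0 1)
    (hh : IntervalIntegrable h volume 0 1)
    (hgh : ∀ t ∈ Set.Icc (0:ℝ) 1, |g t| ≤ h t)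
    {x : ℝ} (hx : x ∈ Set.Icc (0:ℝ) 1) :
    |durrmeyerShift n s g x| ≤ durrmeyerShift n s h x := by
  rw [durrmeyerShift, abs_mul, abs_of_nonneg (by positivity)]
  refine mul_le_mul_of_nonneg_left ((abs_sum_le_sum_abs _ _).trans (sum_le_sum fun k _ => ?_))
    (by positivity)
  rw [abs_mul, abs_of_nonneg (bern_nonneg _ _ hx)]
  refine mul_le_mul_of_nonneg_left ?_ (bern_nonneg _ _ hx)
  refine (intervalIntegral.abs_integral_le_integral_abs zero_le_one).trans
    (intervalIntegral.integral_mono_on zero_le_one ?_ ?_ fun t ht => ?_)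
  · exact (hg.continuousOn_mul (continuous_bern n k).continuousOn).abs
  · exact hh.continuousOn_mul (continuous_bern n k).continuousOn
  · rw [abs_mul, abs_of_nonneg (bern_nonneg _ _ ht)]
    exact mul_le_mul_of_nonneg_left (hgh t ht) (bern_nonneg _ _ ht)

theorem durrmeyerShift_one_add_mul_sq (hs : s ≤ 1) (x : ℝ) :
    durrmeyerShift (m + 1) s (fun t => 1 + ((m + 1 : ℕ) : ℝ) * (t - x) ^ 2) x
      = 1 + (m + 1) * ((m * (m - 1) * x ^ 2 + (2 * s + 4) * m * x + (s + 1) * (s + 2))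
          / ((m + 3) * (m + 4)) - 2 * x * (m * x + s + 1) / (m + 3) + x ^ 2) := by
  set A : ℝ := (m + 1) / ((m + 3) * (m + 4))
  set B : ℝ := (m + 1) * ((2 * s + 3) / ((m + 3) * (m + 4)) - 2 * x / (m + 3))
  set C : ℝ := 1 + (m + 1) * ((s + 1) * (s + 2) / ((m + 3) * (m + 4)) - 2 * x * (s + 1) / (m + 3)
    + x ^ 2)
  have hterm : ∀ j ∈ range (m + 1), (bernsteinPolynomial ℝ m j).eval x *
      ((((m + 1 : ℕ) : ℝ) + 1) * ∫ t in (0:ℝ)..1,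
        bern (m + 1) (s + j : ℕ) t * (1 + ((m + 1 : ℕ) : ℝ) * (t - x) ^ 2))
      = (bernsteinPolynomial ℝ m j).eval x * (A * j ^ 2 + B * j + C) := fun j hj => by
    rw [integral_bern_mul_one_add_sq (by simp at hj; omega)]
    congr 1
    simp only [A, B, C]
    push_cast
    field_simp
    ring
  rw [durrmeyerShift_eq_sum_bernstein hs, sum_congr rfl hterm, sum_bernstein_eval_mul_quadratic]
  simp only [A, B, C]
  field_simp
  ring

theorem durrmeyerShift_zero_add_durrmeyerShift_one_le_four {x : ℝ} (hx : x ∈ Set.Icc (0:ℝ) 1) :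
    durrmeyerShift (m + 1) 0 (fun t => 1 + ((m + 1 : ℕ) : ℝ) * (t - x) ^ 2) x
      + durrmeyerShift (m + 1) 1 (fun t => 1 + ((m + 1 : ℕ) : ℝ) * (t - x) ^ 2) x ≤ 4 := by
  have hsum : durrmeyerShift (m + 1) 0 (fun t => 1 + ((m + 1 : ℕ) : ℝ) * (t - x) ^ 2) x
      + durrmeyerShift (m + 1) 1 (fun t => 1 + ((m + 1 : ℕ) : ℝ) * (t - x) ^ 2) x
      = 2 + (m + 1) * (8 + (4 * (m + 1) - 28) * (x * (1 - x))) / ((m + 3) * (m + 4)) := by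
    rw [durrmeyerShift_one_add_mul_sq zero_le_one, durrmeyerShift_one_add_mul_sq le_rfl]
    field_simp
    ring
  have hy : x * (1 - x) ≤ 1 / 4 := by nlinarith [sq_nonneg (x - 1 / 2)]
  have hfrac :
      (m + 1) * (8 + (4 * (m + 1) - 28) * (x * (1 - x))) / ((m + 3) * (m + 4)) ≤ (2 : ℝ) := by
    rw [div_le_iff₀ (by positivity)]
    nlinarith [mul_nonneg (mul_nonneg hx.1 (sub_nonneg.2 hx.2)) (by positivity : (0:ℝ) ≤ m + 1),
      mul_nonneg (sq_nonneg ((m : ℝ) + 1)) (by linarith : (0:ℝ) ≤ 1 / 4 - x * (1 - x))]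
  linarith

end durrmeyerShift

theorem rpow_le_one_add_sq {u r : ℝ} (hu : 0 ≤ u) (hr0 : 0 ≤ r) (hr1 : r ≤ 1) :
    u ^ r ≤ 1 + u ^ 2 := by
  rcases le_total u 1 with h | h
  · nlinarith [Real.rpow_le_one hu h hr0, sq_nonneg u]
  · have := Real.rpow_le_rpow_of_exponent_le h hr1
    rw [Real.rpow_one] at this
    nlinarith

theorem abs_rpow_le_rpow_neg_mul {r N : ℝ} (hr0 : 0 ≤ r) (hr1 : r ≤ 1) (hN : 0 < N) (s : ℝ) :
    |s| ^ r ≤ N ^ (-(r / 2)) * (1 + N * s ^ 2) := by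
  have hu := rpow_le_one_add_sq (mul_nonneg (Real.sqrt_nonneg N) (abs_nonneg s)) hr0 hr1
  rw [mul_pow, Real.sq_sqrt hN.le, sq_abs, Real.mul_rpow (Real.sqrt_nonneg N) (abs_nonneg s),
    Real.sqrt_eq_rpow, ← Real.rpow_mul hN.le, one_div_mul_eq_div] at hu
  rwa [Real.rpow_neg hN.le, inv_mul_eq_div, le_div_iff₀ (Real.rpow_pos_of_pos hN _), mul_comm]

theorem continuousOn_of_abs_sub_le_mul_rpow {f : ℝ → ℝ} {S : Set ℝ} {k r : ℝ} (hr : 0 < r)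
    (hf : ∀ x ∈ S, ∀ y ∈ S, |f x - f y| ≤ k * |x - y| ^ r) : ContinuousOn f S := by
  intro y hy
  have hbound : Tendsto (fun t => k * |t - y| ^ r) (𝓝[S] y) (𝓝 0) := by
    have : ContinuousAt (fun t => k * |t - y| ^ r) y := by fun_prop (disch := exact Or.inr hr.le)
    simpa [Real.zero_rpow hr.ne'] using this.tendsto.mono_left nhdsWithin_le_nhds
  refine tendsto_iff_norm_sub_tendsto_zero.2
    (squeeze_zero' (Eventually.of_forall fun _ => norm_nonneg _) ?_ hbound)
  filter_upwards [self_mem_nhdsWithin] with t ht using hf t ht y hy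

theorem abs_mul_add_le_of_two_mul_add_eq_one {a0 a1 x : ℝ} (hA : 2 * a0 + a1 = 1)
    (hx : x ∈ Set.Icc (0:ℝ) 1) : |a1 * x + a0| ≤ (|a1| + 1) / 2 := by
  have hx' : |x - 1 / 2| ≤ 1 / 2 := abs_le.2 ⟨by linarith [hx.1], by linarith [hx.2]⟩
  calc |a1 * x + a0| = |a1 * (x - 1 / 2) + 1 / 2| := by congr 1; linarith
    _ ≤ |a1| * |x - 1 / 2| + 1 / 2 := by
      simpa [abs_mul] using abs_add_le (a1 * (x - 1 / 2)) (1 / 2)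
    _ ≤ (|a1| + 1) / 2 := by nlinarith [abs_nonneg a1]

theorem abs_DM1_sub_le {a0 a1 : ℕ → ℝ} {n : ℕ} (hA : 2 * a0 n + a1 n = 1) (f : ℝ → ℝ)
    {x : ℝ} (hx : x ∈ Set.Icc (0:ℝ) 1) :
    |DM1 a0 a1 n f x - f x| ≤ (|a1 n| + 1) / 2 *
      (|durrmeyerShift n 0 f x - f x| + |durrmeyerShift n 1 f x - f x|) := by
  have hsplit : DM1 a0 a1 n f x - f x = (a1 n * x + a0 n) * (durrmeyerShift n 0 f x - f x)
      + (a1 n * (1 - x) + a0 n) * (durrmeyerShift n 1 f x - f x) := by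
    rw [DM1_eq_add]
    linear_combination f x * hA
  have h0 := abs_mul_add_le_of_two_mul_add_eq_one hA hx
  have h1 := abs_mul_add_le_of_two_mul_add_eq_one hA (x := 1 - x)
    ⟨by linarith [hx.2], by linarith [hx.1]⟩
  rw [hsplit, mul_add]
  refine (abs_add_le _ _).trans (add_le_add ?_ ?_) <;> rw [abs_mul] <;> gcongr

theorem abs_durrmeyerShift_sub_le {m s : ℕ} {f : ℝ → ℝ} {r k : ℝ} (hr0 : 0 < r) (hr1 : r ≤ 1)
    (hk : 0 ≤ k) (hf : ∀ x₁ ∈ Set.Icc (0:ℝ) 1, ∀ x₂ ∈ Set.Icc (0:ℝ) 1,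
      |f x₁ - f x₂| ≤ k * |x₁ - x₂| ^ r)
    (hs : s ≤ 1) {x : ℝ} (hx : x ∈ Set.Icc (0:ℝ) 1) :
    |durrmeyerShift (m + 1) s f x - f x| ≤ k * ((m + 1 : ℕ) : ℝ) ^ (-(r / 2)) *
      durrmeyerShift (m + 1) s (fun t => 1 + ((m + 1 : ℕ) : ℝ) * (t - x) ^ 2) x := by
  have hfi : IntervalIntegrable f volume 0 1 :=
    (continuousOn_of_abs_sub_le_mul_rpow hr0 hf).intervalIntegrable_of_Icc zero_le_one
  rw [← durrmeyerShift_const_mul, ← durrmeyerShift_const hs (f x),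
    ← durrmeyerShift_sub hfi intervalIntegrable_const]
  refine abs_durrmeyerShift_le (hfi.sub intervalIntegrable_const)
    (Continuous.intervalIntegrable (by fun_prop) _ _) (fun t ht => ?_) hx
  calc |f t - f x| ≤ k * |t - x| ^ r := hf t ht x hx
    _ ≤ k * (((m + 1 : ℕ) : ℝ) ^ (-(r / 2)) * (1 + ((m + 1 : ℕ) : ℝ) * (t - x) ^ 2)) := by
      gcongr
      exact abs_rpow_le_rpow_neg_mul hr0.le hr1 (by positivity) _
    _ = _ := by ring

theorem DM1_lipschitz_estimate (a0 a1 : ℕ → ℝ)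
    (hA : ∀ n, 2 * a0 n + a1 n = 1)
    (f : ℝ → ℝ) (r k : ℝ) (hr0 : 0 < r) (hr1 : r ≤ 1) (hk : 0 < k)
    (hf : ∀ x₁ ∈ Set.Icc (0:ℝ) 1, ∀ x₂ ∈ Set.Icc (0:ℝ) 1, |f x₁ - f x₂| ≤ k * |x₁ - x₂| ^ r)
    (n : ℕ) (hn : 1 ≤ n) (x : ℝ) (hx : x ∈ Set.Icc (0:ℝ) 1) :
    |DM1 a0 a1 n f x - f x|
      ≤ (3 * |a1 n| + 1) * (1 + Real.sqrt 2) * k * (n : ℝ) ^ (-(r / 2)) := by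
  obtain ⟨m, rfl⟩ : ∃ m, n = m + 1 := ⟨n - 1, by omega⟩
  set ρ := k * ((m + 1 : ℕ) : ℝ) ^ (-(r / 2))
  set L := fun s => durrmeyerShift (m + 1) s (fun t => 1 + ((m + 1 : ℕ) : ℝ) * (t - x) ^ 2) x
  have hρ : 0 ≤ ρ := by positivity
  have hconst : 2 * (|a1 (m + 1)| + 1) ≤ (3 * |a1 (m + 1)| + 1) * (1 + Real.sqrt 2) := by
    nlinarith [abs_nonneg (a1 (m + 1)), Real.one_le_sqrt.2 (one_le_two : (1:ℝ) ≤ 2)]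
  calc |DM1 a0 a1 (m + 1) f x - f x|
      ≤ (|a1 (m + 1)| + 1) / 2 *
          (|durrmeyerShift (m + 1) 0 f x - f x| + |durrmeyerShift (m + 1) 1 f x - f x|) :=
        abs_DM1_sub_le (hA _) f hx
    _ ≤ (|a1 (m + 1)| + 1) / 2 * (ρ * L 0 + ρ * L 1) := by
        gcongr <;> exact abs_durrmeyerShift_sub_le hr0 hr1 hk.le hf (by norm_num) hx
    _ ≤ (|a1 (m + 1)| + 1) / 2 * (ρ * 4) := by
        rw [← mul_add]
        gcongr
        exact durrmeyerShift_zero_add_durrmeyerShift_one_le_four hx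
    _ ≤ (3 * |a1 (m + 1)| + 1) * (1 + Real.sqrt 2) * ρ := by nlinarith
    _ = _ := by simp only [ρ]; ring
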